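/- Let n be a natural number. The set M = M_n(ℤ) with the operation 𝔞 * 𝔟 = [c_ij], c_ij = a_ij + (1 + 2 a_jj) b_ij, is a monoid whose identity element is the zero matrix, and the map t : M → End(G_n), 𝔞 ↦ t_𝔞, is an injective monoid homomorphism into the endomorphism monoid of G_n. -/

import Mathlib

/-- The defining relations of the combinatorial Hantzsche-Wendt group `G_n`:
`x_i⁻¹ x_j² x_i = x_j⁻²` for all `i ≠ j`, written as relators. -/
def HWrels (n : ℕ) : Set (FreeGroup (Fin n)) :=
  {r | ∃ i j : Fin n, i ≠ j ∧
    r = (FreeGroup.of i)⁻¹ * FreeGroup.of j ^ 2 * FreeGroup.of i * FreeGroup.of j ^ 2}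

/-- The combinatorial Hantzsche-Wendt group `G_n`. -/
abbrev HW (n : ℕ) : Type := PresentedGroup (HWrels n)

/-- The generators `x_1, …, x_n` of `G_n`. -/
def x (n : ℕ) (i : Fin n) : HW n := PresentedGroup.of i

/-- A type synonym for `M = M_n(ℤ)`, carrying the monoid structure given by
`𝔞 * 𝔟 = [c_ij]` with `c_ij = a_ij + (1 + 2 a_jj) b_ij`. -/
def MM (n : ℕ) : Type := Matrix (Fin n) (Fin n) ℤ

instance (n : ℕ) : Mul (MM n) :=
  ⟨fun 𝔞 𝔟 i j => 𝔞 i j + (1 + 2 * 𝔞 j j) * 𝔟 i j⟩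

instance (n : ℕ) : One (MM n) := ⟨fun _ _ => (0 : ℤ)⟩

theorem MM.mul_apply {n : ℕ} (𝔞 𝔟 : MM n) (i j : Fin n) :
    (𝔞 * 𝔟) i j = 𝔞 i j + (1 + 2 * 𝔞 j j) * 𝔟 i j := rfl

theorem MM.one_apply {n : ℕ} (i j : Fin n) : (1 : MM n) i j = 0 := rfl

theorem MM.ext {n : ℕ} {𝔞 𝔟 : MM n} (h : ∀ i j, 𝔞 i j = 𝔟 i j) : 𝔞 = 𝔟 :=
  funext fun i => funext fun j => h i j

instance (n : ℕ) : Monoid (MM n) where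
  mul_assoc a b c := MM.ext fun i j => by
    simp only [MM.mul_apply]; ring
  one_mul a := MM.ext fun i j => by simp only [MM.mul_apply, MM.one_apply]; ring
  mul_one a := MM.ext fun i j => by simp only [MM.mul_apply, MM.one_apply]; ring

/-- For an `n × n` integer matrix `𝔞 = [a_ij]`, the element
`a_i = (x_1²)^{a_i1} ⋯ (x_n²)^{a_in}` of `A_n ≤ G_n`. -/
def aElt (n : ℕ) (𝔞 : MM n) (i : Fin n) : HW n :=
  ((List.finRange n).map fun j => (x n j ^ 2) ^ 𝔞 i j).prod

/-!
The squares `x_j²` pairwise commute (conjugation by `x_i` inverts `x_j²`, so `x_i²`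
centralises it), hence `e ↦ ∏ (x_j²)^{e_j}` is a homomorphism `τ : ℤⁿ → A_n`, on which
conjugation by `x_i` acts by the sign change fixing the `i`-th coordinate. Consequently
`(x_j τ(e))² = (x_j²)^{1 + 2e_j}`. This shows both that `x_i ↦ x_i a_i` respects the defining
relations and that `t_𝔞` acts on `A_n` by multiplying the `j`-th coordinate by `1 + 2a_jj`,
which is exactly how the product of `M` arises. Injectivity reduces to that of `τ`: sending `x_k`
to a rotation of the infinite dihedral group and every other generator to a reflection maps
`τ(e)` to the rotation by `2e_k`.
-/

namespace MonoidHom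

variable {G : Type*} [Group G] {ι : Type*} [Fintype ι]
  (y : ι → G) (hy : Pairwise fun i j => Commute (y i) (y j))

def zpowersPi : (ι → Multiplicative ℤ) →* G :=
  noncommPiCoprod (fun i => zpowersHom G (y i)) <|
    hy.mono fun _ _ h _ _ => h.zpow_zpow _ _

@[simp]
theorem zpowersPi_mulSingle [DecidableEq ι] (i : ι) (m : Multiplicative ℤ) :
    zpowersPi y hy (Pi.mulSingle i m) = y i ^ m.toAdd := by
  simp [zpowersPi]

theorem commute_zpowersPi {g : G} (hg : ∀ i, Commute g (y i)) (e : ι → Multiplicative ℤ) :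
    Commute g (zpowersPi y hy e) :=
  commute_noncommPiCoprod _ (fun i _ => (hg i).zpow_right _) e

theorem map_zpowersPi (f : G →* G) (s : ι → ℤ) (hf : ∀ i, f (y i) = y i ^ s i)
    (e : ι → Multiplicative ℤ) :
    f (zpowersPi y hy e) = zpowersPi y hy fun i => e i ^ s i := by
  classical
  let scale : (ι → Multiplicative ℤ) →* (ι → Multiplicative ℤ) :=
    MonoidHom.pi fun i => (zpowGroupHom (s i)).comp (Pi.evalMonoidHom _ i)
  have key : f.comp (zpowersPi y hy) = (zpowersPi y hy).comp scale := by
    refine pi_ext fun i m => ?_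
    have : scale (Pi.mulSingle i m) = Pi.mulSingle i (m ^ s i) := by
      ext j; by_cases h : j = i <;> simp [scale, h]
    simp [this, hf, ← zpow_mul]
  exact DFunLike.congr_fun key e

theorem zpowersPi_eq_prod_finRange {n : ℕ} (y : Fin n → G)
    (hy : Pairwise fun i j => Commute (y i) (y j)) (e : Fin n → Multiplicative ℤ) :
    zpowersPi y hy e = ((List.finRange n).map fun j => y j ^ (e j).toAdd).prod := by
  rw [zpowersPi, noncommPiCoprod_apply]
  exact (Finset.noncommProd_congr (List.toFinset_finRange n).symm (fun _ _ => rfl) _).trans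
    (Finset.noncommProd_toFinset _ _ _ (List.nodup_finRange n))

end MonoidHom

theorem commute_sq_of_inv_mul_mul_eq_inv {G : Type*} [Group G] {a b : G}
    (h : a⁻¹ * b * a = b⁻¹) : Commute (a ^ 2) b := by
  have hba : b * a = a * b⁻¹ := by rw [← h]; group
  have hab : a * b = b⁻¹ * a :=
    calc a * b = a * (a⁻¹ * b * a)⁻¹ := by rw [h, inv_inv]
      _ = b⁻¹ * a := by group
  calc a ^ 2 * b = a * (a * b) := by rw [sq, mul_assoc]
    _ = a * b⁻¹ * a := by rw [hab, mul_assoc]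
    _ = b * a ^ 2 := by rw [← hba, sq, mul_assoc]

namespace HW

open MonoidHom Multiplicative DihedralGroup

variable {n : ℕ}

theorem inv_x_mul_sq_mul_x {i j : Fin n} (h : i ≠ j) :
    (x n i)⁻¹ * x n j ^ 2 * x n i = (x n j ^ 2)⁻¹ := by
  refine eq_inv_of_mul_eq_one_left ?_
  simpa [x, PresentedGroup.of] using PresentedGroup.one_of_mem (rels := HWrels n) ⟨i, j, h, rfl⟩

theorem commute_sq (j k : Fin n) : Commute (x n j ^ 2) (x n k ^ 2) := by
  rcases eq_or_ne j k with rfl | h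
  · rfl
  · exact commute_sq_of_inv_mul_mul_eq_inv (inv_x_mul_sq_mul_x h)

variable (n) in
def translation : (Fin n → Multiplicative ℤ) →* HW n :=
  zpowersPi (fun j => x n j ^ 2) fun j k _ => commute_sq j k

theorem translation_mulSingle (j : Fin n) (m : Multiplicative ℤ) :
    translation n (Pi.mulSingle j m) = (x n j ^ 2) ^ m.toAdd :=
  zpowersPi_mulSingle _ _ j m

theorem aElt_eq_translation (𝔞 : MM n) (i : Fin n) :
    aElt n 𝔞 i = translation n fun j => ofAdd (𝔞 i j) :=
  (zpowersPi_eq_prod_finRange _ _ _).symm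

theorem commute_sq_translation (j : Fin n) (e : Fin n → Multiplicative ℤ) :
    Commute (x n j ^ 2) (translation n e) :=
  commute_zpowersPi _ _ (commute_sq j) e

theorem inv_x_mul_translation_mul_x (i : Fin n) (e : Fin n → Multiplicative ℤ) :
    (x n i)⁻¹ * translation n e * x n i =
      translation n fun k => e k ^ if k = i then (1 : ℤ) else -1 := by
  refine map_zpowersPi _ _ (MulAut.conj (x n i)⁻¹).toMonoidHom _ (fun k => ?_) e
  simp only [MulEquiv.coe_toMonoidHom, MulAut.conj_apply, inv_inv]
  split_ifs with h
  · subst h; group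
  · rw [inv_x_mul_sq_mul_x (Ne.symm h), zpow_neg_one]

theorem sq_x_mul_translation (j : Fin n) (e : Fin n → Multiplicative ℤ) :
    (x n j * translation n e) ^ 2 = (x n j ^ 2) ^ (1 + 2 * (e j).toAdd) := by
  have hsum :
      (fun k => e k ^ (if k = j then (1 : ℤ) else -1)) * e = Pi.mulSingle j (e j ^ 2) := by
    ext k
    by_cases h : k = j
    · subst h; simp [pow_two]
    · simp [h]
  calc (x n j * translation n e) ^ 2
      = x n j ^ 2 * ((x n j)⁻¹ * translation n e * x n j * translation n e) := by
        rw [sq, sq]; group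
    _ = x n j ^ 2 * (x n j ^ 2) ^ (2 * (e j).toAdd) := by
        rw [inv_x_mul_translation_mul_x, ← map_mul, hsum, translation_mulSingle]; simp
    _ = (x n j ^ 2) ^ (1 + 2 * (e j).toAdd) := by rw [zpow_add, zpow_one]

theorem hom_ext {G : Type*} [Group G] {f g : HW n →* G} (h : ∀ i, f (x n i) = g (x n i)) :
    f = g :=
  PresentedGroup.ext h

theorem lift_x_mul_aElt_eq_one (𝔞 : MM n) :
    ∀ r ∈ HWrels n, FreeGroup.lift (fun i => x n i * aElt n 𝔞 i) r = 1 := by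
  rintro _ ⟨i, j, hij, rfl⟩
  simp only [map_mul, map_pow, map_inv, FreeGroup.lift_apply_of, aElt_eq_translation,
    sq_x_mul_translation, toAdd_ofAdd]
  set t := translation n fun k => ofAdd (𝔞 i k)
  set z := (x n j ^ 2) ^ (1 + 2 * 𝔞 j j)
  have hz : (x n i)⁻¹ * z * x n i = z⁻¹ := by
    have := conj_zpow (a := (x n i)⁻¹) (b := x n j ^ 2) (i := 1 + 2 * 𝔞 j j)
    rw [inv_inv] at this
    rw [← this, inv_x_mul_sq_mul_x hij, inv_zpow]
  have htz : Commute t z := ((commute_sq_translation j _).zpow_left _).symm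
  calc (x n i * t)⁻¹ * z * (x n i * t) * z
      = t⁻¹ * ((x n i)⁻¹ * z * x n i) * (t * z) := by group
    _ = 1 := by rw [hz, htz.eq]; group

def translationEnd (𝔞 : MM n) : HW n →* HW n :=
  PresentedGroup.toGroup (lift_x_mul_aElt_eq_one 𝔞)

theorem translationEnd_x (𝔞 : MM n) (i : Fin n) :
    translationEnd 𝔞 (x n i) = x n i * aElt n 𝔞 i :=
  PresentedGroup.toGroup.of _

theorem translationEnd_translation (𝔞 : MM n) (e : Fin n → Multiplicative ℤ) :
    translationEnd 𝔞 (translation n e) = translation n fun k => e k ^ (1 + 2 * 𝔞 k k) :=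
  map_zpowersPi _ _ (translationEnd 𝔞) _ (fun k => by
    rw [map_pow, translationEnd_x, aElt_eq_translation, sq_x_mul_translation, toAdd_ofAdd]) e

theorem translationEnd_one : translationEnd (1 : MM n) = MonoidHom.id (HW n) :=
  hom_ext fun i => by
    have : (fun j => ofAdd ((1 : MM n) i j)) = 1 := funext fun j => by simp [MM.one_apply]
    rw [translationEnd_x, aElt_eq_translation, this, map_one, mul_one, id_apply]

theorem translationEnd_mul (𝔞 𝔟 : MM n) :
    translationEnd (𝔞 * 𝔟) = (translationEnd 𝔞).comp (translationEnd 𝔟) :=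
  hom_ext fun i => by
    have hrow : (fun j => ofAdd ((𝔞 * 𝔟) i j)) =
        (fun j => ofAdd (𝔞 i j)) * fun j => ofAdd (𝔟 i j) ^ (1 + 2 * 𝔞 j j) :=
      funext fun j => by simp [MM.mul_apply, ofAdd_add, mul_comm]
    rw [comp_apply, translationEnd_x, translationEnd_x, map_mul, translationEnd_x,
      aElt_eq_translation, aElt_eq_translation, aElt_eq_translation, translationEnd_translation,
      hrow, map_mul, mul_assoc]

variable (n) in
def translationHom : MM n →* Monoid.End (HW n) where
  toFun := translationEnd
  map_one' := translationEnd_one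
  map_mul' := translationEnd_mul

theorem lift_dihedral_eq_one (k : Fin n) :
    ∀ w ∈ HWrels n,
      FreeGroup.lift (fun i => if i = k then r 1 else sr 0 : Fin n → DihedralGroup 0) w = 1 := by
  rintro _ ⟨i, j, hij, rfl⟩
  simp only [map_mul, map_pow, map_inv, FreeGroup.lift_apply_of]
  split_ifs <;> simp_all [sq, r_mul_r, sr_mul_sr, sr_mul_r]

def toDihedral (k : Fin n) : HW n →* DihedralGroup 0 :=
  PresentedGroup.toGroup (lift_dihedral_eq_one k)

theorem toDihedral_x (k i : Fin n) : toDihedral k (x n i) = if i = k then r 1 else sr 0 :=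
  PresentedGroup.toGroup.of _

theorem toDihedral_translation (k : Fin n) (e : Fin n → Multiplicative ℤ) :
    toDihedral k (translation n e) = r 2 ^ (e k).toAdd := by
  classical
  have : (toDihedral k).comp (translation n) =
      (zpowersHom _ (r 2)).comp (Pi.evalMonoidHom _ k) := by
    refine pi_ext fun j m => ?_
    by_cases h : j = k
    · subst h; simp [translation_mulSingle, toDihedral_x, sq, r_mul_r, one_add_one_eq_two]
    · simp [translation_mulSingle, toDihedral_x, h, Ne.symm h, sq]
  exact DFunLike.congr_fun this e

theorem translation_injective : Function.Injective (translation n) := by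
  intro e e' h
  funext k
  have := congrArg (toDihedral k) h
  rw [toDihedral_translation, toDihedral_translation, r_zpow, r_zpow] at this
  simpa using r.inj this

theorem translationHom_injective : Function.Injective (translationHom n) := by
  intro 𝔞 𝔟 h
  refine MM.ext fun i j => ?_
  have hx : x n i * aElt n 𝔞 i = x n i * aElt n 𝔟 i := by
    rw [← translationEnd_x, ← translationEnd_x]
    exact DFunLike.congr_fun h (x n i)
  rw [aElt_eq_translation, aElt_eq_translation] at hx
  simpa using congrFun (translation_injective (mul_left_cancel hx)) j

end HW

/-- `(M_n(ℤ), *)` is a monoid with identity the zero matrix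
(witnessed above by the `Monoid (MM n)` instance whose identity has all entries `0`,
and restated explicitly below), and `𝔞 ↦ t_𝔞` is an injective monoid homomorphism
into the endomorphism monoid of `G_n`. -/
theorem stmt3 (n : ℕ) :
    (∀ 𝔞 𝔟 𝔠 : MM n, 𝔞 * 𝔟 * 𝔠 = 𝔞 * (𝔟 * 𝔠)) ∧
    (∀ 𝔞 𝔟 : MM n, ∀ i j, (𝔞 * 𝔟) i j = 𝔞 i j + (1 + 2 * 𝔞 j j) * 𝔟 i j) ∧
    (∀ i j, (1 : MM n) i j = 0) ∧
    (∀ 𝔞 : MM n, 1 * 𝔞 = 𝔞 ∧ 𝔞 * 1 = 𝔞) ∧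
    ∃ t : MM n →* Monoid.End (HW n),
      (∀ (𝔞 : MM n) (i : Fin n), t 𝔞 (x n i) = x n i * aElt n 𝔞 i) ∧
      Function.Injective t :=
  ⟨mul_assoc, MM.mul_apply, MM.one_apply, fun 𝔞 => ⟨one_mul 𝔞, mul_one 𝔞⟩,
    HW.translationHom n, HW.translationEnd_x, HW.translationHom_injective⟩
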